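/- arXiv:2203.14064 — 3 statements merged into one kernel-verified Lean document; each statement's English description precedes it below -/
import Mathlib

section
/- Let B = 1 + T_max − A, L = ln(1 + T_max), F = sqrt( c·L·(1 − w)·( c·C_req·L·(1 − w) + 4·C_budget·w·B ) / C_req ), and f* = 2·w·C_budget / ( F − L·c·(1 − w) ). Then F > L·c·(1 − w), f* > 0, and f* satisfies the first-order condition B·(f*)² − C_req·f* = w·C_req·C_budget / ((1 − w)·c·L); equivalently, the derivative of the vehicle's edge-offloading utility U_i vanishes at f*. -/
/-- With `B = 1 + T_max − A`, `L = ln(1 + T_max)`,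
`F = sqrt(c·L·(1−w)·(c·C_req·L·(1−w) + 4·C_budget·w·B)/C_req)` and
`f* = 2·w·C_budget/(F − L·c·(1−w))`, we have `F > L·c·(1−w)`, `f* > 0`,
the first-order condition `B·(f*)² − C_req·f* = w·C_req·C_budget/((1−w)·c·L)`,
and equivalently the derivative of the vehicle's edge-offloading utility
vanishes at `f*`. -/
theorem vehicle_utility_first_order_condition
    (w Tmax A Creq c Cbudget : ℝ)
    (hw0 : 0 < w) (hw1 : w < 1)
    (hT : 0 < Tmax)
    (hA0 : 0 ≤ A) (hA1 : A < 1 + Tmax)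
    (hC : 0 < Creq) (hc : 0 < c) (hCb : 0 < Cbudget) :
    let B := 1 + Tmax - A
    let L := Real.log (1 + Tmax)
    let F := Real.sqrt
      (c * L * (1 - w) * (c * Creq * L * (1 - w) + 4 * Cbudget * w * B) / Creq)
    let fstar := 2 * w * Cbudget / (F - L * c * (1 - w))
    F > L * c * (1 - w) ∧
    fstar > 0 ∧
    B * fstar ^ 2 - Creq * fstar = w * Creq * Cbudget / ((1 - w) * c * L) ∧
    deriv (fun f : ℝ =>
        w * Real.log (1 + Tmax - A - Creq / f) / Real.log (1 + Tmax)
          - (1 - w) * c * f / Cbudget) fstar = 0 := by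
  intro B L F fstar
  have h1w : 0 < 1 - w := by linarith
  have hL : 0 < L := by
    show (0:ℝ) < Real.log (1 + Tmax)
    exact Real.log_pos (by linarith)
  have hB : 0 < B := by show (0:ℝ) < 1 + Tmax - A; linarith
  have hXpos : 0 < c * L * (1 - w) * (c * Creq * L * (1 - w) + 4 * Cbudget * w * B) / Creq := by
    positivity
  have hF2 : F ^ 2 = c * L * (1 - w) * (c * Creq * L * (1 - w) + 4 * Cbudget * w * B) / Creq := by
    show Real.sqrt _ ^ 2 = _
    exact Real.sq_sqrt hXpos.le
  have hFnn : 0 ≤ F := Real.sqrt_nonneg _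
  have hextra : 0 < c * L * (1 - w) * (4 * Cbudget * w * B) / Creq := by positivity
  have hF2' : F ^ 2 * Creq = (L * c * (1 - w)) ^ 2 * Creq + c * L * (1 - w) * (4 * Cbudget * w * B) := by
    field_simp at hF2
    nlinarith [hF2]
  have hFgt : F > L * c * (1 - w) := by
    have hkpos : 0 < L * c * (1 - w) := by positivity
    by_contra h
    push_neg at h
    have h2 : F ^ 2 ≤ (L * c * (1 - w)) ^ 2 := by
      have := pow_le_pow_left₀ hFnn h 2
      linarith
    have hE : 0 < c * L * (1 - w) * (4 * Cbudget * w * B) := by positivity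
    nlinarith [hF2', mul_le_mul_of_nonneg_right h2 hC.le]
  have hfpos : 0 < fstar := by
    show 0 < 2 * w * Cbudget / (F - L * c * (1 - w))
    apply div_pos (by positivity) (by linarith)
  have hFOC : B * fstar ^ 2 - Creq * fstar = w * Creq * Cbudget / ((1 - w) * c * L) := by
    show B * (2 * w * Cbudget / (F - L * c * (1 - w))) ^ 2
        - Creq * (2 * w * Cbudget / (F - L * c * (1 - w)))
        = w * Creq * Cbudget / ((1 - w) * c * L)
    have hD : (0:ℝ) < F - L * c * (1 - w) := sub_pos.2 hFgt
    have key : Creq * (F - L * c * (1 - w)) ^ 2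
        = 2 * Creq * (L * c * (1 - w)) ^ 2 - 2 * Creq * (L * c * (1 - w)) * F
          + 4 * Cbudget * w * B * (L * c * (1 - w)) := by
      linear_combination hF2'
    have hkpos : 0 < L * c * (1 - w) := by positivity
    have e1 : B * (2 * w * Cbudget / (F - L * c * (1 - w))) ^ 2
        - Creq * (2 * w * Cbudget / (F - L * c * (1 - w)))
        = (B * (2 * w * Cbudget) ^ 2
            - Creq * (2 * w * Cbudget) * (F - L * c * (1 - w)))
          / (F - L * c * (1 - w)) ^ 2 := by
      field_simp
    rw [e1, div_eq_div_iff (by positivity) (by positivity)]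
    linear_combination (w * Cbudget) * key - 2 * w * Cbudget * hF2'
  refine ⟨hFgt, hfpos, hFOC, ?_⟩
  have hBe : (1:ℝ) + Tmax - A = B := rfl
  have hLe : Real.log (1 + Tmax) = L := rfl
  clear_value B L F fstar
  have hrhs : 0 < w * Creq * Cbudget / ((1 - w) * c * L) := by positivity
  have hBf : 0 < B * fstar - Creq := by
    have hmul : fstar * (B * fstar - Creq) = w * Creq * Cbudget / ((1 - w) * c * L) := by
      linear_combination hFOC
    by_contra h
    push_neg at h
    have : fstar * (B * fstar - Creq) ≤ 0 := mul_nonpos_of_nonneg_of_nonpos hfpos.le h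
    linarith
  have hinner : 0 < 1 + Tmax - A - Creq / fstar := by
    rw [sub_pos, div_lt_iff₀ hfpos, hBe]
    linarith
  have hfs : fstar ≠ 0 := ne_of_gt hfpos
  have d1 : HasDerivAt (fun f : ℝ => 1 + Tmax - A - Creq / f) (Creq / fstar ^ 2) fstar := by
    have h := (hasDerivAt_inv hfs).const_mul Creq
    have h2 := (hasDerivAt_const fstar (1 + Tmax - A)).sub h
    simpa [div_eq_mul_inv, Pi.sub_def] using h2
  have d2 : HasDerivAt (fun f : ℝ => Real.log (1 + Tmax - A - Creq / f))
      (Creq / fstar ^ 2 / (1 + Tmax - A - Creq / fstar)) fstar := d1.log hinner.ne'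
  have d3 : HasDerivAt (fun f : ℝ =>
      w * Real.log (1 + Tmax - A - Creq / f) / Real.log (1 + Tmax)
        - (1 - w) * c * f / Cbudget)
      (w * (Creq / fstar ^ 2 / (1 + Tmax - A - Creq / fstar)) / Real.log (1 + Tmax)
        - (1 - w) * c / Cbudget) fstar := by
    have ha := (d2.const_mul w).div_const (Real.log (1 + Tmax))
    have hb := ((hasDerivAt_id fstar).const_mul ((1 - w) * c)).div_const Cbudget
    simpa [Pi.sub_def] using ha.sub hb
  rw [d3.deriv]
  have hFOC' : (B * fstar ^ 2 - Creq * fstar) * ((1 - w) * c * L) = w * Creq * Cbudget := by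
    rw [hFOC]; field_simp
  rw [hBe, hLe, sub_eq_zero]
  rw [div_eq_div_iff hL.ne' hCb.ne']
  have hinner' : B - Creq / fstar ≠ 0 := by
    rw [← hBe]; exact hinner.ne'
  field_simp [hfs, hinner', show fstar * B - Creq ≠ 0 by rw [mul_comm]; exact hBf.ne']
  linear_combination (-1) * hFOC'
end

section
/- The point f* = 2·w·C_budget / ( F − ln(1 + T_max)·c·(1 − w) ), with F = sqrt( c·ln(1 + T_max)·(1 − w)·( c·C_req·ln(1 + T_max)·(1 − w) + 4·C_budget·w·(1 + T_max − A) ) / C_req ), lies in the interval (C_req/(1 + T_max − A), ∞) and is the unique global maximizer of the vehicle's edge-offloading utility U_i on that interval: for every f in that interval with f ≠ f*, U_i(f) < U_i(f*). -/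
set_option maxHeartbeats 1000000 in
/-- The point `f* = 2·w·C_budget/(F − ln(1+T_max)·c·(1−w))`, with
`F = sqrt(c·ln(1+T_max)·(1−w)·(c·C_req·ln(1+T_max)·(1−w) + 4·C_budget·w·(1+T_max−A))/C_req)`,
lies in `(C_req/(1+T_max−A), ∞)` and is the unique global maximizer of the
vehicle's edge-offloading utility on that interval. -/
theorem vehicle_utility_unique_maximizer
    (w Tmax A Creq c Cbudget : ℝ)
    (hw0 : 0 < w) (hw1 : w < 1)
    (hT : 0 < Tmax)
    (hA0 : 0 ≤ A) (hA1 : A < 1 + Tmax)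
    (hC : 0 < Creq) (hc : 0 < c) (hCb : 0 < Cbudget) :
    let F := Real.sqrt
      (c * Real.log (1 + Tmax) * (1 - w) *
        (c * Creq * Real.log (1 + Tmax) * (1 - w)
          + 4 * Cbudget * w * (1 + Tmax - A)) / Creq)
    let fstar := 2 * w * Cbudget / (F - Real.log (1 + Tmax) * c * (1 - w))
    let U : ℝ → ℝ := fun f =>
      w * Real.log (1 + Tmax - A - Creq / f) / Real.log (1 + Tmax)
        - (1 - w) * c * f / Cbudget
    fstar ∈ Set.Ioi (Creq / (1 + Tmax - A)) ∧
    ∀ f ∈ Set.Ioi (Creq / (1 + Tmax - A)), f ≠ fstar → U f < U fstar := by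
  intro F fstar U
  set B : ℝ := 1 + Tmax - A with hBdef
  set L : ℝ := Real.log (1 + Tmax) with hLdef
  have hB : 0 < B := by rw [hBdef]; linarith
  have hL : 0 < L := Real.log_pos (by linarith)
  have hw' : 0 < 1 - w := by linarith
  have hFdef : F = Real.sqrt
      (c * L * (1 - w) * (c * Creq * L * (1 - w) + 4 * Cbudget * w * B) / Creq) := rfl
  have hfdef : fstar = 2 * w * Cbudget / (F - L * c * (1 - w)) := rfl
  have hUdef : U = fun f =>
      w * Real.log (B - Creq / f) / L - (1 - w) * c * f / Cbudget := rfl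
  clear_value U fstar F B L
  subst hUdef
  have harg : 0 ≤ c * L * (1 - w) * (c * Creq * L * (1 - w) + 4 * Cbudget * w * B) / Creq := by
    positivity
  have hF2 : F ^ 2 = c * L * (1 - w) * (c * Creq * L * (1 - w) + 4 * Cbudget * w * B) / Creq := by
    rw [hFdef]; exact Real.sq_sqrt harg
  have hF0 : 0 ≤ F := hFdef ▸ Real.sqrt_nonneg _
  have hCF2 : Creq * F ^ 2 = Creq * (c * L * (1 - w)) ^ 2 + 4 * (c * L * (1 - w)) * Cbudget * w * B := by
    rw [hF2]; field_simp
  have hFgt : L * c * (1 - w) < F := by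
    have h1 : (L * c * (1 - w)) ^ 2 < F ^ 2 := by
      nlinarith [mul_pos (mul_pos (mul_pos (show (0:ℝ) < 4 * (c * L * (1 - w)) by positivity) hCb) hw0) hB]
    exact lt_of_pow_lt_pow_left₀ 2 hF0 h1
  have hD : 0 < F - L * c * (1 - w) := by linarith
  have hfpos : 0 < fstar := by rw [hfdef]; positivity
  -- key quadratic identity
  have hquad : L * (1 - w) * c * (fstar * (B * fstar - Creq)) = w * Creq * Cbudget := by
    rw [hfdef]
    have hDne : F - L * (1 - w) * c ≠ 0 := by rw [show L * (1 - w) * c = L * c * (1 - w) by ring]; exact hD.ne'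
    field_simp
    linear_combination (-1) * hCF2
  have hBf : Creq < B * fstar := by
    nlinarith [hquad, mul_pos (mul_pos (mul_pos hL hw') hc) hfpos,
      mul_pos (mul_pos hw0 hC) hCb]
  have hgt : Creq / B < fstar := (div_lt_iff₀ hB).2 (by linarith)
  -- derivative
  have hderiv : ∀ x, Creq / B < x →
      HasDerivAt (fun f => w * Real.log (B - Creq / f) / L - (1 - w) * c * f / Cbudget)
        (w * Creq / (L * (x * (B * x - Creq))) - (1 - w) * c / Cbudget) x := by
    intro x hx
    have hx0 : 0 < x := lt_trans (by positivity) hx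
    have hBx : Creq < B * x := by
      rw [div_lt_iff₀ hB] at hx; linarith
    have hg : 0 < B - Creq / x := by
      rw [sub_pos, div_lt_iff₀ hx0]; linarith
    have h1 : HasDerivAt (fun f : ℝ => Creq / f) (-(Creq / x ^ 2)) x := by
      simpa [div_eq_mul_inv, mul_comm] using (hasDerivAt_inv hx0.ne').const_mul Creq
    have h2 : HasDerivAt (fun f : ℝ => B - Creq / f) (Creq / x ^ 2) x := by
      exact ((hasDerivAt_const x B).sub h1).congr_deriv (by ring)
    have h3 : HasDerivAt (fun f : ℝ => Real.log (B - Creq / f))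
        ((B - Creq / x)⁻¹ * (Creq / x ^ 2)) x :=
      HasDerivAt.comp x (Real.hasDerivAt_log hg.ne') h2
    have h4 : HasDerivAt (fun f : ℝ => w * Real.log (B - Creq / f) / L)
        (w * ((B - Creq / x)⁻¹ * (Creq / x ^ 2)) / L) x := (h3.const_mul w).div_const L
    have h5 : HasDerivAt (fun f : ℝ => (1 - w) * c * f / Cbudget)
        ((1 - w) * c / Cbudget) x := by
      simpa using ((hasDerivAt_id x).const_mul ((1 - w) * c)).div_const Cbudget
    have h6 := h4.sub h5
    have hval : w * Creq / (L * (x * (B * x - Creq))) - (1 - w) * c / Cbudget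
        = w * ((B - Creq / x)⁻¹ * (Creq / x ^ 2)) / L - (1 - w) * c / Cbudget := by
      have hxne : x ≠ 0 := hx0.ne'
      have hgne : B - Creq / x ≠ 0 := hg.ne'
      have hBxc : B * x - Creq ≠ 0 := by apply ne_of_gt; linarith
      field_simp
    rw [hval]; exact h6
  -- sign of derivative
  have hdpos : ∀ x, Creq / B < x → x < fstar →
      0 < w * Creq / (L * (x * (B * x - Creq))) - (1 - w) * c / Cbudget := by
    intro x hx hxf
    have hx0 : 0 < x := lt_trans (by positivity) hx
    have hBx : Creq < B * x := by rw [div_lt_iff₀ hB] at hx; linarith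
    have hxq : 0 < L * (x * (B * x - Creq)) := by
      apply mul_pos hL; apply mul_pos hx0; linarith
    have expand : L * (1 - w) * c * (fstar * (B * fstar - Creq)) - L * (1 - w) * c * (x * (B * x - Creq))
        = L * (1 - w) * c * ((fstar - x) * (B * (fstar + x) - Creq)) := by ring
    have hprod : 0 < L * (1 - w) * c * ((fstar - x) * (B * (fstar + x) - Creq)) :=
      mul_pos (mul_pos (mul_pos hL hw') hc) (mul_pos (sub_pos.2 hxf) (by linarith))
    have key : L * (1 - w) * c * (x * (B * x - Creq)) < w * Creq * Cbudget := by linarith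
    rw [sub_pos, div_lt_div_iff₀ hCb hxq]
    nlinarith [key]
  have hdneg : ∀ x, fstar < x →
      w * Creq / (L * (x * (B * x - Creq))) - (1 - w) * c / Cbudget < 0 := by
    intro x hxf
    have hx : Creq / B < x := lt_trans hgt hxf
    have hx0 : 0 < x := lt_trans (by positivity) hx
    have hBx : Creq < B * x := by rw [div_lt_iff₀ hB] at hx; linarith
    have hxq : 0 < L * (x * (B * x - Creq)) := by
      apply mul_pos hL; apply mul_pos hx0; linarith
    have expand : L * (1 - w) * c * (x * (B * x - Creq)) - L * (1 - w) * c * (fstar * (B * fstar - Creq))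
        = L * (1 - w) * c * ((x - fstar) * (B * (x + fstar) - Creq)) := by ring
    have hprod : 0 < L * (1 - w) * c * ((x - fstar) * (B * (x + fstar) - Creq)) :=
      mul_pos (mul_pos (mul_pos hL hw') hc) (mul_pos (sub_pos.2 hxf) (by linarith))
    have key : w * Creq * Cbudget < L * (1 - w) * c * (x * (B * x - Creq)) := by linarith
    rw [sub_neg, div_lt_div_iff₀ hxq hCb]
    nlinarith [key]
  refine ⟨Set.mem_Ioi.2 hgt, ?_⟩
  intro f hf hne
  have hf' : Creq / B < f := hf
  rcases lt_or_gt_of_ne hne with hlt | hgt2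
  · have hsub : Set.Icc f fstar ⊆ Set.Ioi (Creq / B) := fun y hy => lt_of_lt_of_le hf' hy.1
    have hcont : ContinuousOn (fun f => w * Real.log (B - Creq / f) / L - (1 - w) * c * f / Cbudget) (Set.Icc f fstar) := fun y hy =>
      ((hderiv y (hsub hy)).continuousAt).continuousWithinAt
    have hmono : StrictMonoOn (fun f => w * Real.log (B - Creq / f) / L - (1 - w) * c * f / Cbudget) (Set.Icc f fstar) := by
      apply strictMonoOn_of_deriv_pos (convex_Icc _ _) hcont
      intro y hy
      rw [interior_Icc] at hy
      rw [(hderiv y (lt_trans hf' hy.1)).deriv]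
      exact hdpos y (lt_trans hf' hy.1) hy.2
    exact hmono (Set.left_mem_Icc.2 hlt.le) (Set.right_mem_Icc.2 hlt.le) hlt
  · have hsub : Set.Icc fstar f ⊆ Set.Ioi (Creq / B) := fun y hy => lt_of_lt_of_le hgt hy.1
    have hcont : ContinuousOn (fun f => w * Real.log (B - Creq / f) / L - (1 - w) * c * f / Cbudget) (Set.Icc fstar f) := fun y hy =>
      ((hderiv y (hsub hy)).continuousAt).continuousWithinAt
    have hanti : StrictAntiOn (fun f => w * Real.log (B - Creq / f) / L - (1 - w) * c * f / Cbudget) (Set.Icc fstar f) := by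
      apply strictAntiOn_of_deriv_neg (convex_Icc _ _) hcont
      intro y hy
      rw [interior_Icc] at hy
      rw [(hderiv y (lt_trans hgt hy.1)).deriv]
      exact hdneg y hy.1
    exact hanti (Set.left_mem_Icc.2 hgt2.le) (Set.right_mem_Icc.2 hgt2.le) hgt2
end

section
/- Let K (tasks) and S (servers) be nonempty finite sets, let q : S → ℕ be capacities with q(s) ≥ 1 for all s, let each task k ∈ K have a strict total preference order ≻_k on S, and let each server s ∈ S have a strict total preference order ≻_s on K. Then there exists a stable many-to-one matching μ (fibers within capacity and no blocking pair) that is weakly Pareto optimal for the tasks among stable matchings: there is no stable matching ν such that every task k ∈ K strictly prefers its assignment under ν to its assignment under μ (where being matched to any server is strictly preferred to being unmatched, and server s is strictly preferred to server s' according to ≻_k). -/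
/-- A many-to-one matching `μ : K → Option S` is stable (for capacities `q`,
task preferences `prefK` and server preferences `prefS`) if it respects the
capacities and admits no blocking pair. -/
def StableMatching {K S : Type} [Fintype K] [DecidableEq S]
    (q : S → ℕ) (prefK : K → S → S → Prop) (prefS : S → K → K → Prop)
    (μ : K → Option S) : Prop :=
  (∀ s : S, (Finset.univ.filter fun k => μ k = some s).card ≤ q s) ∧
  ¬ ∃ (k : K) (s : S),
      μ k ≠ some s ∧
      (μ k = none ∨ ∃ s' : S, μ k = some s' ∧ prefK k s s') ∧
      ((Finset.univ.filter fun k' => μ k' = some s).card < q s ∨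
        ∃ k' : K, μ k' = some s ∧ prefS s k k')

/-- A task `k` strictly prefers assignment `o₁` to assignment `o₂`: being
matched to any server beats being unmatched, and among servers `prefK k`
decides. -/
def TaskStrictlyPrefers {K S : Type} (prefK : K → S → S → Prop)
    (k : K) (o₁ o₂ : Option S) : Prop :=
  match o₁, o₂ with
  | some _, none => True
  | some s, some s' => prefK k s s'
  | none, _ => False

section Aux

lemma sto_irrefl {α : Type} {r : α → α → Prop} (h : IsStrictTotalOrder α r) (a : α) :
    ¬ r a a := h.toIsStrictOrder.toIrrefl.irrefl a

lemma sto_trans {α : Type} {r : α → α → Prop} (h : IsStrictTotalOrder α r) {a b c : α} :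
    r a b → r b c → r a c := fun h1 h2 => h.toIsStrictOrder.toIsTrans.trans _ _ _ h1 h2

lemma sto_asymm {α : Type} {r : α → α → Prop} (h : IsStrictTotalOrder α r) {a b : α} :
    r a b → ¬ r b a := fun h1 h2 => sto_irrefl h a (sto_trans h h1 h2)

open Classical in
/-- A strict subset of dominated-sets when `r s s'`. -/
lemma dominated_card_lt {α : Type} [Fintype α] {r : α → α → Prop}
    (h : IsStrictTotalOrder α r) {s s' : α} (hss : r s s') :
    (Finset.univ.filter fun t => r s' t).card < (Finset.univ.filter fun t => r s t).card := by
  classical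
  apply Finset.card_lt_card
  have hsub : (Finset.univ.filter fun t => r s' t) ⊆ (Finset.univ.filter fun t => r s t) := by
    intro x hx
    simp only [Finset.mem_filter, Finset.mem_univ, true_and] at hx ⊢
    exact sto_trans h hss hx
  rw [Finset.ssubset_iff_of_subset hsub]
  refine ⟨s', ?_, ?_⟩
  · simp [hss]
  · simp [sto_irrefl h s']

/-- In a nonempty finite set there is a worst element w.r.t. a strict total order. -/
lemma exists_worst {α : Type} [Fintype α] [DecidableEq α] {r : α → α → Prop}
    (h : IsStrictTotalOrder α r) {A : Finset α} (hA : A.Nonempty) :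
    ∃ w ∈ A, ∀ k' ∈ A, k' ≠ w → r k' w := by
  classical
  obtain ⟨w, hw, hmin⟩ := A.exists_min_image
      (fun k' => (Finset.univ.filter fun x => r k' x).card) hA
  refine ⟨w, hw, fun k' hk' hne => ?_⟩
  rcases (letI := h; trichotomous_of r k' w) with h1 | h1 | h1
  · exact h1
  · exact absurd h1 hne
  · exact absurd (hmin k' hk') (not_le.mpr (dominated_card_lt h h1))

end Aux

section GS

variable {K S : Type} [Fintype K] [Fintype S] [DecidableEq K] [DecidableEq S]
variable (q : S → ℕ) (prefK : K → S → S → Prop) (prefS : S → K → K → Prop)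

/-- The invariant of the deferred-acceptance algorithm.  `p k` is the list of
servers `k` has not yet proposed to (in decreasing order of preference) and
`μ` the current tentative matching. -/
def GSInv (p : K → List S) (μ : K → Option S) : Prop :=
  (∀ s, (Finset.univ.filter fun k => μ k = some s).card ≤ q s) ∧
  (∀ k, (p k).Pairwise (prefK k)) ∧
  (∀ k s', μ k = some s' → s' ∉ p k ∧ ∀ s, prefK k s s' → s ∉ p k) ∧
  (∀ k s, s ∉ p k → μ k ≠ some s →
    (Finset.univ.filter fun k' => μ k' = some s).card = q s ∧
    ∀ k', μ k' = some s → prefS s k' k)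

lemma terminal_stable (hS : ∀ s, IsStrictTotalOrder K (prefS s))
    {p : K → List S} {μ : K → Option S}
    (hinv : GSInv q prefK prefS p μ) (hterm : ∀ k, μ k = none → p k = []) :
    StableMatching q prefK prefS μ := by
  obtain ⟨h1, h2, h3, h4⟩ := hinv
  refine ⟨h1, ?_⟩
  rintro ⟨k, s, hne, hpref, hwant⟩
  have hsnot : s ∉ p k := by
    rcases hpref with h | ⟨s', hs', hp⟩
    · simp [hterm k h]
    · exact (h3 k s' hs').2 s hp
  obtain ⟨hfull, hallpref⟩ := h4 k s hsnot hne
  rcases hwant with hlt | ⟨k', hk', hp⟩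
  · omega
  · exact sto_asymm (hS s) hp (hallpref k' hk')

lemma gs_aux (hq : ∀ s, 1 ≤ q s)
    (hK : ∀ k, IsStrictTotalOrder S (prefK k))
    (hS : ∀ s, IsStrictTotalOrder K (prefS s)) :
    ∀ n : ℕ, ∀ p : K → List S, ∀ μ : K → Option S,
      GSInv q prefK prefS p μ → (∑ k, (p k).length) ≤ n →
      ∃ μ', StableMatching q prefK prefS μ' := by
  intro n
  induction n using Nat.strong_induction_on with
  | _ n ih =>
  intro p μ hinv hlen
  by_cases hterm : ∀ k, μ k = none → p k = []
  · exact ⟨μ, terminal_stable q prefK prefS hS hinv hterm⟩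
  push_neg at hterm
  obtain ⟨k₀, hk₀none, hk₀ne⟩ := hterm
  obtain ⟨s₀, rest, hp⟩ : ∃ s₀ rest, p k₀ = s₀ :: rest := by
    cases h : p k₀ with
    | nil => exact absurd h hk₀ne
    | cons a l => exact ⟨a, l, rfl⟩
  obtain ⟨h1, h2, h3, h4⟩ := hinv
  set held := Finset.univ.filter fun k => μ k = some s₀ with hheld
  set p' := Function.update p k₀ rest with hp'def
  have hp'k₀ : p' k₀ = rest := Function.update_self _ _ _
  have hp'ne : ∀ k, k ≠ k₀ → p' k = p k := fun k h => Function.update_of_ne h _ _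
  -- measure decreases
  have hmeas : (∑ k, (p' k).length) < ∑ k, (p k).length := by
    apply Finset.sum_lt_sum
    · intro i _
      by_cases h : i = k₀
      · subst h; rw [hp'k₀, hp]; exact Nat.le_succ _
      · rw [hp'ne i h]
    · exact ⟨k₀, Finset.mem_univ _, by rw [hp'k₀, hp]; exact Nat.lt_succ_self _⟩
  have hmeas' : (∑ k, (p' k).length) < n := lt_of_lt_of_le hmeas hlen
  -- pairwise facts
  have hpair := h2 k₀
  rw [hp] at hpair
  have hhead : ∀ t ∈ rest, prefK k₀ s₀ t := (List.pairwise_cons.mp hpair).1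
  have hs₀rest : s₀ ∉ rest := fun h => sto_irrefl (hK k₀) s₀ (hhead _ h)
  have h2' : ∀ k, (p' k).Pairwise (prefK k) := by
    intro k
    by_cases h : k = k₀
    · subst h; rw [hp'k₀]; exact (List.pairwise_cons.mp hpair).2
    · rw [hp'ne k h]; exact h2 k
  have h3k₀ : s₀ ∉ p' k₀ ∧ ∀ s, prefK k₀ s s₀ → s ∉ p' k₀ := by
    rw [hp'k₀]
    exact ⟨hs₀rest, fun s hs hmem => sto_asymm (hK k₀) hs (hhead _ hmem)⟩
  have hnotp : ∀ s, s ≠ s₀ → s ∉ rest → s ∉ p k₀ := by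
    intro s h1' h2' hmem
    rw [hp] at hmem
    rcases List.mem_cons.mp hmem with h | h
    · exact h1' h
    · exact h2' h
  have hk₀held : k₀ ∉ held := by simp [hheld, hk₀none]
  by_cases hcard : held.card < q s₀
  · -- Case A : accept k₀ under capacity
    set μ' := Function.update μ k₀ (some s₀) with hμ'def
    have hμ'k₀ : μ' k₀ = some s₀ := Function.update_self _ _ _
    have hμ'ne : ∀ k, k ≠ k₀ → μ' k = μ k := fun k h => Function.update_of_ne h _ _
    have hfilt : ∀ s, (Finset.univ.filter fun k => μ' k = some s) =
        if s = s₀ then insert k₀ held else Finset.univ.filter fun k => μ k = some s := by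
      intro s
      split_ifs with h
      · subst h
        ext x
        simp only [Finset.mem_filter, Finset.mem_univ, true_and, Finset.mem_insert, hheld]
        by_cases hx : x = k₀
        · subst hx; simp [hμ'k₀]
        · rw [hμ'ne x hx]; simp [hx]
      · ext x
        simp only [Finset.mem_filter, Finset.mem_univ, true_and]
        by_cases hx : x = k₀
        · subst hx
          rw [hμ'k₀, hk₀none]
          simp [Ne.symm h]
        · rw [hμ'ne x hx]
    have hcard₀ : (Finset.univ.filter fun k => μ' k = some s₀).card = held.card + 1 := by
      rw [hfilt s₀, if_pos rfl, Finset.card_insert_of_notMem hk₀held]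
    have hcards : ∀ s, s ≠ s₀ → (Finset.univ.filter fun k => μ' k = some s) =
        Finset.univ.filter fun k => μ k = some s := by
      intro s h; rw [hfilt s, if_neg h]
    refine ih _ hmeas' p' μ' ⟨?_, h2', ?_, ?_⟩ le_rfl
    · intro s
      by_cases h : s = s₀
      · subst h; rw [hcard₀]; omega
      · rw [hcards s h]; exact h1 s
    · intro k s' hks'
      by_cases h : k = k₀
      · subst h
        rw [hμ'k₀] at hks'
        injection hks' with h'
        subst h'
        exact h3k₀
      · rw [hμ'ne k h] at hks'
        rw [hp'ne k h]
        exact h3 k s' hks'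
    · intro k s hs hne
      by_cases h : k = k₀
      · subst h
        rw [hμ'k₀] at hne
        have hss₀ : s ≠ s₀ := fun h' => hne (by rw [h'])
        rw [hp'k₀] at hs
        obtain ⟨hfull, hpref⟩ := h4 k s (hnotp s hss₀ hs) (by rw [hk₀none]; simp)
        rw [hcards s hss₀]
        refine ⟨hfull, fun k' hk' => ?_⟩
        have hk'k₀ : k' ≠ k := by
          intro h'; subst h'; rw [hμ'k₀] at hk'; exact hss₀ (by injection hk' with h''; exact h''.symm)
        rw [hμ'ne k' hk'k₀] at hk'
        exact hpref k' hk'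
      · rw [hp'ne k h] at hs
        rw [hμ'ne k h] at hne
        obtain ⟨hfull, hpref⟩ := h4 k s hs hne
        have hss₀ : s ≠ s₀ := by
          intro h'; subst h'; rw [← hheld] at hfull; omega
        rw [hcards s hss₀]
        refine ⟨hfull, fun k' hk' => ?_⟩
        have hk'k₀ : k' ≠ k₀ := by
          intro h'; subst h'; rw [hμ'k₀] at hk'; exact hss₀ (by injection hk' with h''; exact h''.symm)
        rw [hμ'ne k' hk'k₀] at hk'
        exact hpref k' hk'
  · -- Case B : s₀ is full
    have hfull₀ : held.card = q s₀ := le_antisymm (h1 s₀) (not_lt.mp hcard)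
    have hheldne : held.Nonempty := by
      rw [← Finset.card_pos, hfull₀]; exact hq s₀
    obtain ⟨w, hw, hwmin⟩ := exists_worst (hS s₀) hheldne
    have hμw : μ w = some s₀ := by
      have := hw; rw [hheld, Finset.mem_filter] at this; exact this.2
    have hwk₀ : w ≠ k₀ := by
      intro h; rw [h, hk₀none] at hμw; exact nomatch hμw
    by_cases hB1 : prefS s₀ k₀ w
    · -- Case B1 : swap w for k₀
      set μ' := Function.update (Function.update μ w none) k₀ (some s₀) with hμ'def
      have hμ'k₀ : μ' k₀ = some s₀ := Function.update_self _ _ _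
      have hμ'w : μ' w = none := by
        rw [hμ'def, Function.update_of_ne hwk₀, Function.update_self]
      have hμ'ne : ∀ k, k ≠ k₀ → k ≠ w → μ' k = μ k := fun k h h' => by
        rw [hμ'def, Function.update_of_ne h, Function.update_of_ne h']
      have hfilt : ∀ s, (Finset.univ.filter fun k => μ' k = some s) =
          if s = s₀ then insert k₀ (held.erase w) else Finset.univ.filter fun k => μ k = some s := by
        intro s
        split_ifs with h
        · subst h
          ext x
          simp only [Finset.mem_filter, Finset.mem_univ, true_and, Finset.mem_insert,
            Finset.mem_erase, hheld]
          by_cases hx : x = k₀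
          · subst hx; simp [hμ'k₀]
          · by_cases hx' : x = w
            · subst hx'; rw [hμ'w]; simp [hx]
            · rw [hμ'ne x hx hx']; simp [hx, hx']
        · ext x
          simp only [Finset.mem_filter, Finset.mem_univ, true_and]
          by_cases hx : x = k₀
          · subst hx; rw [hμ'k₀, hk₀none]; simp [Ne.symm h]
          · by_cases hx' : x = w
            · subst hx'; rw [hμ'w, hμw]; simp [Ne.symm h]
            · rw [hμ'ne x hx hx']
      have hk₀erase : k₀ ∉ held.erase w := fun h => hk₀held (Finset.mem_of_mem_erase h)
      have hcard₀ : (Finset.univ.filter fun k => μ' k = some s₀).card = q s₀ := by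
        rw [hfilt s₀, if_pos rfl, Finset.card_insert_of_notMem hk₀erase,
          Finset.card_erase_of_mem hw, hfull₀]
        have := hq s₀; omega
      have hcards : ∀ s, s ≠ s₀ → (Finset.univ.filter fun k => μ' k = some s) =
          Finset.univ.filter fun k => μ k = some s := by
        intro s h; rw [hfilt s, if_neg h]
      -- members of the new fiber of s₀
      have hmem₀ : ∀ k', μ' k' = some s₀ → k' = k₀ ∨ (μ k' = some s₀ ∧ k' ≠ w) := by
        intro k' hk'
        by_cases h : k' = k₀
        · exact Or.inl h
        · by_cases h' : k' = w
          · subst h'; rw [hμ'w] at hk'; exact nomatch hk'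
          · rw [hμ'ne k' h h'] at hk'; exact Or.inr ⟨hk', h'⟩
      refine ih _ hmeas' p' μ' ⟨?_, h2', ?_, ?_⟩ le_rfl
      · intro s
        by_cases h : s = s₀
        · subst h; rw [hcard₀]
        · rw [hcards s h]; exact h1 s
      · intro k s' hks'
        by_cases h : k = k₀
        · subst h
          rw [hμ'k₀] at hks'
          injection hks' with h'
          subst h'
          exact h3k₀
        · by_cases h' : k = w
          · subst h'; rw [hμ'w] at hks'; exact nomatch hks'
          · rw [hμ'ne k h h'] at hks'
            rw [hp'ne k h]
            exact h3 k s' hks'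
      · intro k s hs hne
        by_cases h : k = k₀
        · subst h
          rw [hμ'k₀] at hne
          have hss₀ : s ≠ s₀ := fun h' => hne (by rw [h'])
          rw [hp'k₀] at hs
          obtain ⟨hfull, hpref⟩ := h4 k s (hnotp s hss₀ hs) (by rw [hk₀none]; simp)
          rw [hcards s hss₀]
          refine ⟨hfull, fun k' hk' => ?_⟩
          have hk'k₀ : k' ≠ k := by
            intro h'; subst h'; rw [hμ'k₀] at hk'
            exact hss₀ (by injection hk' with h''; exact h''.symm)
          have hk'w : k' ≠ w := by
            intro h'; subst h'; rw [hμ'w] at hk'; exact nomatch hk'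
          rw [hμ'ne k' hk'k₀ hk'w] at hk'
          exact hpref k' hk'
        · by_cases h' : k = w
          · subst h'
            rw [hp'ne k hwk₀] at hs
            by_cases hss₀ : s = s₀
            · subst hss₀
              refine ⟨hcard₀, fun k' hk' => ?_⟩
              rcases hmem₀ k' hk' with h'' | ⟨hk'₀, hk'w⟩
              · subst h''; exact hB1
              · exact hwmin k' (by rw [hheld, Finset.mem_filter]; exact ⟨Finset.mem_univ _, hk'₀⟩) hk'w
            · obtain ⟨hfull, hpref⟩ := h4 k s hs (by
                rw [hμw]; intro h''; exact hss₀ (by injection h'' with h₃; exact h₃.symm))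
              rw [hcards s hss₀]
              refine ⟨hfull, fun k' hk' => ?_⟩
              have hk'k₀ : k' ≠ k₀ := by
                intro h''; subst h''; rw [hμ'k₀] at hk'
                exact hss₀ (by injection hk' with h₃; exact h₃.symm)
              have hk'w : k' ≠ k := by
                intro h''; subst h''; rw [hμ'w] at hk'; exact nomatch hk'
              rw [hμ'ne k' hk'k₀ hk'w] at hk'
              exact hpref k' hk'
          · rw [hp'ne k h] at hs
            rw [hμ'ne k h h'] at hne
            obtain ⟨hfull, hpref⟩ := h4 k s hs hne
            by_cases hss₀ : s = s₀
            · subst hss₀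
              refine ⟨hcard₀, fun k' hk' => ?_⟩
              rcases hmem₀ k' hk' with h'' | ⟨hk'₀, _⟩
              · subst h''; exact sto_trans (hS s) hB1 (hpref w hμw)
              · exact hpref k' hk'₀
            · rw [hcards s hss₀]
              refine ⟨hfull, fun k' hk' => ?_⟩
              have hk'k₀ : k' ≠ k₀ := by
                intro h''; subst h''; rw [hμ'k₀] at hk'
                exact hss₀ (by injection hk' with h₃; exact h₃.symm)
              have hk'w : k' ≠ w := by
                intro h''; subst h''; rw [hμ'w] at hk'; exact nomatch hk'
              rw [hμ'ne k' hk'k₀ hk'w] at hk'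
              exact hpref k' hk'
    · -- Case B2 : reject k₀
      have hwk₀' : prefS s₀ w k₀ := by
        rcases (letI := hS s₀; trichotomous_of (prefS s₀) k₀ w) with h | h | h
        · exact absurd h hB1
        · exact absurd h.symm hwk₀
        · exact h
      refine ih _ hmeas' p' μ ⟨h1, h2', ?_, ?_⟩ le_rfl
      · intro k s' hks'
        have h : k ≠ k₀ := by
          intro h'; subst h'; rw [hk₀none] at hks'; exact nomatch hks'
        rw [hp'ne k h]
        exact h3 k s' hks'
      · intro k s hs hne
        by_cases h : k = k₀
        · subst h
          rw [hp'k₀] at hs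
          by_cases hss₀ : s = s₀
          · subst hss₀
            rw [← hheld]
            refine ⟨hfull₀, fun k' hk' => ?_⟩
            have hk'held : k' ∈ held := by rw [hheld, Finset.mem_filter]; exact ⟨Finset.mem_univ _, hk'⟩
            by_cases h' : k' = w
            · subst h'; exact hwk₀'
            · exact sto_trans (hS s) (hwmin k' hk'held h') hwk₀'
          · exact h4 k s (hnotp s hss₀ hs) hne
        · rw [hp'ne k h] at hs
          exact h4 k s hs hne

lemma exists_stable (hq : ∀ s, 1 ≤ q s)
    (hK : ∀ k, IsStrictTotalOrder S (prefK k))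
    (hS : ∀ s, IsStrictTotalOrder K (prefS s)) :
    ∃ μ, StableMatching q prefK prefS μ := by
  classical
  set r : K → S → S → Prop := fun k a b => prefK k a b ∨ a = b with hr
  set p : K → List S := fun k => List.insertionSort (r k) Finset.univ.toList with hpdef
  have hmem : ∀ k s, s ∈ p k := by
    intro k s
    rw [hpdef]
    rw [List.mem_insertionSort]
    simp
  have hpair : ∀ k, (p k).Pairwise (prefK k) := by
    intro k
    haveI : IsTotal S (r k) := ⟨fun a b => by
      rcases (letI := hK k; trichotomous_of (prefK k) a b) with h | h | h
      exacts [Or.inl (Or.inl h), Or.inl (Or.inr h), Or.inr (Or.inl h)]⟩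
    haveI : IsTrans S (r k) := ⟨fun a b c hab hbc => by
      rcases hab with hab | hab
      · rcases hbc with hbc | hbc
        · exact Or.inl (sto_trans (hK k) hab hbc)
        · subst hbc; exact Or.inl hab
      · subst hab; exact hbc⟩
    have hs : List.Pairwise (r k) (p k) := List.pairwise_insertionSort _ _
    have hnd : (p k).Nodup := ((List.perm_insertionSort (r k) _).nodup_iff).mpr
      (Finset.nodup_toList _)
    exact (List.Pairwise.and hs hnd).imp fun {a b} h => h.1.resolve_right h.2
  have hinv : GSInv q prefK prefS p (fun _ => none) := by
    refine ⟨fun s => ?_, hpair, fun k s' h => absurd h (by simp), fun k s hs _ => absurd (hmem k s) hs⟩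
    have : (Finset.univ.filter fun (_ : K) => (none : Option S) = some s) = ∅ := by
      ext x; simp
    rw [this, Finset.card_empty]
    exact Nat.zero_le _
  exact gs_aux q prefK prefS hq hK hS _ p _ hinv le_rfl

end GS

/-- There exists a stable many-to-one matching between tasks and servers that
is weakly Pareto optimal for the tasks among stable matchings: no stable
matching makes every task strictly better off. -/
theorem exists_stable_weakly_pareto_optimal_matching
    (K S : Type) [Fintype K] [Fintype S] [Nonempty K] [Nonempty S]
    [DecidableEq K] [DecidableEq S]
    (q : S → ℕ) (hq : ∀ s, 1 ≤ q s)
    (prefK : K → S → S → Prop) (hK : ∀ k, IsStrictTotalOrder S (prefK k))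
    (prefS : S → K → K → Prop) (hS : ∀ s, IsStrictTotalOrder K (prefS s)) :
    ∃ μ : K → Option S,
      StableMatching q prefK prefS μ ∧
      ¬ ∃ ν : K → Option S,
          StableMatching q prefK prefS ν ∧
          ∀ k : K, TaskStrictlyPrefers prefK k (ν k) (μ k) := by
  classical
  set rank : K → Option S → ℕ := fun k o =>
    o.elim 0 (fun s => (Finset.univ.filter fun s' => prefK k s s').card + 1) with hrank
  set F : (K → Option S) → ℕ := fun μ => ∑ k, rank k (μ k) with hF
  have hranklt : ∀ k o₁ o₂, TaskStrictlyPrefers prefK k o₁ o₂ → rank k o₂ < rank k o₁ := by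
    intro k o₁ o₂ h
    match o₁, o₂ with
    | some s, none =>
        simp [hrank]
    | some s, some s' =>
        have hp : prefK k s s' := h
        simp only [hrank, Option.elim]
        have := dominated_card_lt (hK k) hp
        omega
    | none, o₂ => exact absurd h (by cases o₂ <;> exact not_false)
  set A : Finset (K → Option S) := Finset.univ.filter fun μ => StableMatching q prefK prefS μ
    with hA
  have hAne : A.Nonempty := by
    obtain ⟨μ₀, hμ₀⟩ := exists_stable q prefK prefS hq hK hS
    exact ⟨μ₀, by rw [hA, Finset.mem_filter]; exact ⟨Finset.mem_univ _, hμ₀⟩⟩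
  obtain ⟨μ, hμA, hmax⟩ := A.exists_max_image F hAne
  refine ⟨μ, (Finset.mem_filter.mp hμA).2, ?_⟩
  rintro ⟨ν, hν, hdom⟩
  have hνA : ν ∈ A := by rw [hA, Finset.mem_filter]; exact ⟨Finset.mem_univ _, hν⟩
  have hlt : F μ < F ν := by
    apply Finset.sum_lt_sum
    · exact fun k _ => le_of_lt (hranklt k _ _ (hdom k))
    · obtain ⟨k⟩ := ‹Nonempty K›
      exact ⟨k, Finset.mem_univ _, hranklt k _ _ (hdom k)⟩
  exact absurd (hmax ν hνA) (not_le.mpr hlt)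
end
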